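/- arXiv:2602.17792 — 2 statements merged into one kernel-verified Lean document; each statement's English description precedes it below -/
import Mathlib

section
/- With Σ_RSR = σ²[(I−P)G(I−P) + I] as above, the GLS estimator β̂_RSR = (Xᵀ Σ_RSR⁻¹ X)⁻¹ Xᵀ Σ_RSR⁻¹ Y equals the OLS estimator (XᵀX)⁻¹XᵀY. -/
open Matrix

/-- With `Σ_RSR = σ²[(I−P)G(I−P) + I]`, the GLS estimator
`(Xᵀ Σ_RSR⁻¹ X)⁻¹ Xᵀ Σ_RSR⁻¹ Y` coincides with the OLS estimator `(XᵀX)⁻¹XᵀY`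
(Zimmerman & Ver Hoef). -/
theorem stmt_11 (n p : ℕ) (X : Matrix (Fin n) (Fin p) ℝ) (hX : IsUnit (Xᵀ * X).det)
    (G : Matrix (Fin n) (Fin n) ℝ) (hG : G.PosSemidef) (σ2 : ℝ) (hσ : 0 < σ2)
    (Y : Fin n → ℝ) :
    let P : Matrix (Fin n) (Fin n) ℝ := X * (Xᵀ * X)⁻¹ * Xᵀ
    let S : Matrix (Fin n) (Fin n) ℝ := σ2 • ((1 - P) * G * (1 - P) + 1)
    ((Xᵀ * S⁻¹ * X)⁻¹ * (Xᵀ * S⁻¹)).mulVec Y = ((Xᵀ * X)⁻¹ * Xᵀ).mulVec Y := by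
  intro P S
  set M : Matrix (Fin n) (Fin n) ℝ := (1 - P) * G * (1 - P) with hMdef
  -- P is symmetric
  have hXtXsymm : (Xᵀ * X)ᵀ = Xᵀ * X := by rw [transpose_mul, transpose_transpose]
  have hPsymm : Pᵀ = P := by
    show (X * (Xᵀ * X)⁻¹ * Xᵀ)ᵀ = X * (Xᵀ * X)⁻¹ * Xᵀ
    rw [transpose_mul, transpose_mul, transpose_transpose, transpose_nonsing_inv, hXtXsymm,
      Matrix.mul_assoc]
  have hGsymm : Gᵀ = G := hG.isHermitian.eq
  -- (1 - P) * X = 0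
  have h1PX : (1 - P) * X = 0 := by
    have : P * X = X := by
      show X * (Xᵀ * X)⁻¹ * Xᵀ * X = X
      rw [Matrix.mul_assoc, Matrix.mul_assoc,
        Matrix.nonsing_inv_mul _ hX, Matrix.mul_one]
    rw [Matrix.sub_mul, Matrix.one_mul, this, sub_self]
  have hMX : M * X = 0 := by
    rw [hMdef, Matrix.mul_assoc, h1PX, Matrix.mul_zero]
  -- M + 1 is positive definite, in particular invertible
  have hMpsd : M.PosSemidef := by
    have := hG.mul_mul_conjTranspose_same (1 - P)
    rwa [conjTranspose_eq_transpose_of_trivial, transpose_sub, transpose_one, hPsymm] at this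
  have hM1 : (M + 1).PosDef := Matrix.PosDef.posSemidef_add hMpsd Matrix.PosDef.one
  have hM1unit : IsUnit (M + 1).det := hM1.det_pos.ne'.isUnit
  have hM1symm : (M + 1)ᵀ = M + 1 := by
    rw [transpose_add, transpose_one, hMdef, transpose_mul, transpose_mul,
      transpose_sub, transpose_one, hPsymm, hGsymm, Matrix.mul_assoc]
  -- (M+1)⁻¹ * X = X
  have hinvX : (M + 1)⁻¹ * X = X := by
    have h : (M + 1) * X = X := by rw [Matrix.add_mul, hMX, Matrix.one_mul, zero_add]
    calc (M + 1)⁻¹ * X = (M + 1)⁻¹ * ((M + 1) * X) := by rw [h]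
    _ = X := by rw [← Matrix.mul_assoc, Matrix.nonsing_inv_mul _ hM1unit, Matrix.one_mul]
  have hXtinv : Xᵀ * (M + 1)⁻¹ = Xᵀ := by
    have := congrArg transpose hinvX
    rwa [transpose_mul, transpose_nonsing_inv, hM1symm] at this
  -- S⁻¹ = σ2⁻¹ • (M+1)⁻¹
  have hSinv : S⁻¹ = σ2⁻¹ • (M + 1)⁻¹ := by
    apply Matrix.inv_eq_right_inv
    show (σ2 • (M + 1)) * (σ2⁻¹ • (M + 1)⁻¹) = 1
    rw [Matrix.smul_mul, Matrix.mul_smul, Matrix.mul_nonsing_inv _ hM1unit, smul_smul,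
      mul_inv_cancel₀ hσ.ne', one_smul]
  have hXtS : Xᵀ * S⁻¹ = σ2⁻¹ • Xᵀ := by
    rw [hSinv, Matrix.mul_smul, hXtinv]
  have hmid : Xᵀ * S⁻¹ * X = σ2⁻¹ • (Xᵀ * X) := by
    rw [hXtS, Matrix.smul_mul]
  have hmidinv : (Xᵀ * S⁻¹ * X)⁻¹ = σ2 • (Xᵀ * X)⁻¹ := by
    rw [hmid]
    apply Matrix.inv_eq_right_inv
    rw [Matrix.smul_mul, Matrix.mul_smul, Matrix.mul_nonsing_inv _ hX, smul_smul,
      inv_mul_cancel₀ hσ.ne', one_smul]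
  rw [hmidinv, hXtS, Matrix.smul_mul, Matrix.mul_smul, smul_smul,
    mul_inv_cancel₀ hσ.ne', one_smul]
end

section
/- Under the RSR model Y = Xβ + (I−P)γ + ε with γ ~ N(0, σ²G), ε ~ N(0, σ²I) independent, the OLS/GLS estimator β̂ = (XᵀX)⁻¹XᵀY is unbiased for β and has covariance matrix σ²(XᵀX)⁻¹, identical to the OLS covariance under the non-spatial model Y = Xβ + ε. -/
open Matrix MeasureTheory

/-!
Write `A = (XᵀX)⁻¹Xᵀ`. Then `A X = 1`, so `A P = A` and `A (I − P) = 0`: the estimator is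
`β̂ = β + A ε`, and the spatial effect `γ` drops out entirely. Hence `E β̂ = β`, and
`Cov β̂ = A (σ²I) Aᵀ = σ² A Aᵀ = σ² (XᵀX)⁻¹`, exactly as for ordinary least squares.
-/

namespace Matrix

variable {m n R : Type*} [Fintype m] [Fintype n] [DecidableEq n] [CommRing R]

noncomputable def olsMatrix (X : Matrix m n R) : Matrix n m R := (Xᵀ * X)⁻¹ * Xᵀ

theorem olsMatrix_mul_self {X : Matrix m n R} (hX : IsUnit (Xᵀ * X).det) :
    olsMatrix X * X = 1 := by
  rw [olsMatrix, Matrix.mul_assoc, nonsing_inv_mul _ hX]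

theorem olsMatrix_mul_one_sub_hat [DecidableEq m] {X : Matrix m n R}
    (hX : IsUnit (Xᵀ * X).det) : olsMatrix X * (1 - X * olsMatrix X) = 0 := by
  rw [Matrix.mul_sub, Matrix.mul_one, ← Matrix.mul_assoc, olsMatrix_mul_self hX,
    Matrix.one_mul, sub_self]

theorem olsMatrix_mul_transpose_olsMatrix {X : Matrix m n R} (hX : IsUnit (Xᵀ * X).det) :
    olsMatrix X * (olsMatrix X)ᵀ = (Xᵀ * X)⁻¹ := by
  have hsymm : ((Xᵀ * X)⁻¹)ᵀ = (Xᵀ * X)⁻¹ := by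
    rw [transpose_nonsing_inv, transpose_mul, transpose_transpose]
  rw [olsMatrix, transpose_mul, transpose_transpose, hsymm, ← Matrix.mul_assoc, ← olsMatrix,
    olsMatrix_mul_self hX, Matrix.one_mul]

end Matrix

section RandomVector

variable {Ω ι κ : Type*} [MeasurableSpace Ω] {μ : Measure Ω} [Fintype ι] {ε : Ω → ι → ℝ}

theorem integrable_mulVec_apply (A : Matrix κ ι ℝ) (hε : ∀ i, Integrable (fun ω => ε ω i) μ)
    (j : κ) : Integrable (fun ω => (A *ᵥ ε ω) j) μ :=
  integrable_finsetSum _ fun i _ => (hε i).const_mul (A j i)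

theorem integral_mulVec_apply (A : Matrix κ ι ℝ) (hε : ∀ i, Integrable (fun ω => ε ω i) μ)
    (j : κ) : ∫ ω, (A *ᵥ ε ω) j ∂μ = (A *ᵥ fun i => ∫ ω, ε ω i ∂μ) j := by
  simp only [mulVec, dotProduct]
  rw [integral_finsetSum _ fun i _ => (hε i).const_mul (A j i)]
  simp only [integral_const_mul]

theorem integral_mulVec_mul_mulVec_apply (A B : Matrix κ ι ℝ)
    (hε : ∀ i l, Integrable (fun ω => ε ω i * ε ω l) μ) (j k : κ) :
    ∫ ω, (A *ᵥ ε ω) j * (B *ᵥ ε ω) k ∂μ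
      = (A * Matrix.of (fun i l => ∫ ω, ε ω i * ε ω l ∂μ) * Bᵀ) j k := by
  have hexpand : ∀ ω, (A *ᵥ ε ω) j * (B *ᵥ ε ω) k
      = ∑ i, ∑ l, A j i * B k l * (ε ω i * ε ω l) := fun ω => by
    simp only [mulVec, dotProduct, Finset.sum_mul_sum]
    exact Finset.sum_congr rfl fun i _ => Finset.sum_congr rfl fun l _ => by ring
  simp only [hexpand, Matrix.mul_apply, Matrix.of_apply, transpose_apply, Finset.sum_mul]
  rw [integral_finsetSum _ fun i _ =>
    integrable_finsetSum _ fun l _ => (hε i l).const_mul _, Finset.sum_comm]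
  refine Finset.sum_congr rfl fun i _ => ?_
  rw [integral_finsetSum _ fun l _ => (hε i l).const_mul _]
  refine Finset.sum_congr rfl fun l _ => ?_
  rw [integral_const_mul]
  ring

end RandomVector

theorem stmt_12_general {Ω : Type*} [MeasurableSpace Ω] (μ : Measure Ω) [IsProbabilityMeasure μ]
    (n p : ℕ) (X : Matrix (Fin n) (Fin p) ℝ) (hX : IsUnit (Xᵀ * X).det)
    (σ2 : ℝ)
    (β : Fin p → ℝ) (γ ε : Ω → Fin n → ℝ) (Y : Ω → Fin n → ℝ)
    (P : Matrix (Fin n) (Fin n) ℝ) (hP : P = X * (Xᵀ * X)⁻¹ * Xᵀ)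
    (hY : ∀ ω, Y ω = X.mulVec β + ((1 : Matrix (Fin n) (Fin n) ℝ) - P).mulVec (γ ω) + ε ω)
    (hmε : ∀ i, ∫ ω, ε ω i ∂μ = 0)
    (hcε : ∀ i j, ∫ ω, ε ω i * ε ω j ∂μ = σ2 * (1 : Matrix (Fin n) (Fin n) ℝ) i j)
    (hintε : ∀ i, Integrable (fun ω => ε ω i) μ)
    (hint2ε : ∀ i j, Integrable (fun ω => ε ω i * ε ω j) μ) :
    let βhat : Ω → Fin p → ℝ := fun ω => ((Xᵀ * X)⁻¹ * Xᵀ).mulVec (Y ω)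
    (∀ j, ∫ ω, βhat ω j ∂μ = β j) ∧
    (∀ j k, ∫ ω, (βhat ω j - β j) * (βhat ω k - β k) ∂μ = σ2 * ((Xᵀ * X)⁻¹) j k) := by
  intro βhat
  have hP' : P = X * olsMatrix X := by rw [hP, Matrix.mul_assoc, olsMatrix]
  have hβhat : ∀ ω, βhat ω = β + olsMatrix X *ᵥ ε ω := fun ω => by
    change olsMatrix X *ᵥ Y ω = _
    rw [hY ω, hP', mulVec_add, mulVec_add, mulVec_mulVec, mulVec_mulVec, olsMatrix_mul_self hX,
      olsMatrix_mul_one_sub_hat hX, one_mulVec, zero_mulVec, add_zero]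
  have hcov : Matrix.of (fun i l => ∫ ω, ε ω i * ε ω l ∂μ) = σ2 • 1 := by
    ext i l
    exact hcε i l
  refine ⟨fun j => ?_, fun j k => ?_⟩
  · simp only [hβhat, Pi.add_apply]
    rw [integral_add (integrable_const _) (integrable_mulVec_apply _ hintε j),
      integral_mulVec_apply _ hintε, show (fun i => ∫ ω, ε ω i ∂μ) = 0 from funext hmε]
    simp
  · simp only [hβhat, Pi.add_apply, add_sub_cancel_left]
    rw [integral_mulVec_mul_mulVec_apply _ _ hint2ε, hcov, Matrix.mul_smul, Matrix.mul_one,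
      Matrix.smul_mul, olsMatrix_mul_transpose_olsMatrix hX, Matrix.smul_apply, smul_eq_mul]

/-- Under the RSR model `Y = Xβ + (I−P)γ + ε` with `γ` mean-zero with covariance `σ²G`,
`ε` mean-zero with covariance `σ²I`, uncorrelated with `γ`, the OLS estimator
`β̂ = (XᵀX)⁻¹XᵀY` is unbiased with covariance `σ²(XᵀX)⁻¹`
(identical to OLS under the non-spatial model). -/
theorem stmt_12 {Ω : Type*} [MeasurableSpace Ω] (μ : Measure Ω) [IsProbabilityMeasure μ]
    (n p : ℕ) (X : Matrix (Fin n) (Fin p) ℝ) (hX : IsUnit (Xᵀ * X).det)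
    (G : Matrix (Fin n) (Fin n) ℝ) (hG : G.PosSemidef) (σ2 : ℝ) (hσ : 0 < σ2)
    (β : Fin p → ℝ) (γ ε : Ω → Fin n → ℝ) (Y : Ω → Fin n → ℝ)
    (P : Matrix (Fin n) (Fin n) ℝ) (hP : P = X * (Xᵀ * X)⁻¹ * Xᵀ)
    (hY : ∀ ω, Y ω = X.mulVec β + ((1 : Matrix (Fin n) (Fin n) ℝ) - P).mulVec (γ ω) + ε ω)
    (hmγ : ∀ i, ∫ ω, γ ω i ∂μ = 0) (hmε : ∀ i, ∫ ω, ε ω i ∂μ = 0)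
    (hcγ : ∀ i j, ∫ ω, γ ω i * γ ω j ∂μ = σ2 * G i j)
    (hcε : ∀ i j, ∫ ω, ε ω i * ε ω j ∂μ = σ2 * (1 : Matrix (Fin n) (Fin n) ℝ) i j)
    (hcγε : ∀ i j, ∫ ω, γ ω i * ε ω j ∂μ = 0)
    (hintγ : ∀ i, Integrable (fun ω => γ ω i) μ)
    (hintε : ∀ i, Integrable (fun ω => ε ω i) μ)
    (hint2γ : ∀ i j, Integrable (fun ω => γ ω i * γ ω j) μ)
    (hint2ε : ∀ i j, Integrable (fun ω => ε ω i * ε ω j) μ)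
    (hint2γε : ∀ i j, Integrable (fun ω => γ ω i * ε ω j) μ) :
    let βhat : Ω → Fin p → ℝ := fun ω => ((Xᵀ * X)⁻¹ * Xᵀ).mulVec (Y ω)
    (∀ j, ∫ ω, βhat ω j ∂μ = β j) ∧
    (∀ j k, ∫ ω, (βhat ω j - β j) * (βhat ω k - β k) ∂μ = σ2 * ((Xᵀ * X)⁻¹) j k) :=
  stmt_12_general μ n p X hX σ2 β γ ε Y P hP hY hmε hcε hintε hint2ε
end
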